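/- Let y ∈ F(X_r). The flow π_y defined by y on the Schreier graph Sch_{d-1}(y) of the cyclic subgroup ⟨y⟩ in S_{r,d-1} is identically zero if and only if y = 1 in S_{r,d}. -/

import Mathlib

open scoped Classical

attribute [local instance] derivedSeries_normal

/-- The set of right cosets `Hg` of a subgroup `H` of `G`. -/
def RCoset {G : Type*} [Group G] (H : Subgroup G) := Quotient (QuotientGroup.rightRel H)

/-- The root of the Schreier graph: the coset `H·1 = H`. -/
def rcRoot {G : Type*} [Group G] (H : Subgroup G) : RCoset H := Quotient.mk'' 1

/-- Right multiplication on right cosets: `Hg ↦ Hgx` (the edges of the Schreier graph). -/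
def rcStep {G : Type*} [Group G] (H : Subgroup G) (v : RCoset H) (g : G) : RCoset H :=
  Quotient.map' (· * g)
    (fun a b hab => by
      rw [QuotientGroup.rightRel_apply] at hab ⊢
      simpa [mul_assoc] using hab) v

/-- The flow defined by a word traced from a vertex `v` in a complete folded inverse
`X`-digraph whose vertices are acted on by a group `G` via `act` (e.g. the Schreier
graph of a subgroup, with vertices the right cosets and `act` right multiplication);
`emb : X → G` names the generators.  The positive edge from vertex `a` labeled `y`
goes from `a` to `act a (emb y)`. -/
noncomputable def vFlow {V G X : Type*} [Group G] (act : V → G → V) (emb : X → G) :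
    V → List (X × Bool) → V → X → ℤ
  | _, [], _, _ => 0
  | v, (x, true) :: c, a, y =>
      (if a = v ∧ y = x then 1 else 0) + vFlow act emb (act v (emb x)) c a y
  | v, (x, false) :: c, a, y =>
      (if a = act v (emb x)⁻¹ ∧ y = x then -1 else 0) + vFlow act emb (act v (emb x)⁻¹) c a y

/-!
Let `K ≤ F(X)` be the preimage of a subgroup `H` of `G = F(X)/N`. Reading a word of `K` from the
root of `Sch(H)` gives a homomorphism from `K` to the free abelian group on the edges, and its
kernel is `[K, K]`: for a transversal `t`, summing the images in `Kᵃᵇ` of the Schreier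
generators `t_v x t_{vx}⁻¹` with the flow as coefficients gives back the image of the word. Now take `N = F^{(d-1)}` and `H = ⟨y⟩`. As `K/N` is
cyclic, `[K, K] ≤ N`; so `y ∈ [K, K]` forces `y ∈ N`, hence `K = N` and `y ∈ [N, N] = F^{(d)}`.
Conversely `F^{(d)} = [N, N] ≤ [K, K]`.
-/

theorem Subgroup.mem_commutator_comap_zpowers_iff {F : Type*} [Group F] (N : Subgroup F)
    [N.Normal] (y : F) :
    y ∈ ⁅(zpowers (y : F ⧸ N)).comap (QuotientGroup.mk' N),
        (zpowers (y : F ⧸ N)).comap (QuotientGroup.mk' N)⁆ ↔ y ∈ ⁅N, N⁆ := by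
  set K := (zpowers (y : F ⧸ N)).comap (QuotientGroup.mk' N) with hK
  have hNK : N ≤ K := by
    rw [← QuotientGroup.ker_mk' N, ← MonoidHom.comap_bot]
    exact comap_mono bot_le
  have hKN : ⁅K, K⁆ ≤ N := by
    have hcyc : ⁅zpowers (y : F ⧸ N), zpowers (y : F ⧸ N)⁆ = ⊥ :=
      commutator_self_eq_bot_iff.mpr inferInstance
    rw [← QuotientGroup.ker_mk' N, ← MonoidHom.comap_bot, ← map_le_iff_le_comap, map_commutator,
      ← hcyc]
    exact commutator_mono (map_comap_le _ _) (map_comap_le _ _)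
  refine ⟨fun hy => ?_, fun hy => commutator_mono hNK hNK hy⟩
  have hy1 : (y : F ⧸ N) = 1 := (QuotientGroup.eq_one_iff y).mpr (hKN hy)
  have hKeq : K = N := by
    rw [hK, hy1, zpowers_one_eq_bot, MonoidHom.comap_bot, QuotientGroup.ker_mk']
  rwa [hKeq] at hy

theorem FreeGroup.mk_cons_true {X : Type*} (x : X) (c : List (X × Bool)) :
    FreeGroup.mk ((x, true) :: c) = FreeGroup.of x * FreeGroup.mk c := by
  rw [FreeGroup.of, FreeGroup.mul_mk]; rfl

theorem FreeGroup.mk_cons_false {X : Type*} (x : X) (c : List (X × Bool)) :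
    FreeGroup.mk ((x, false) :: c) = (FreeGroup.of x)⁻¹ * FreeGroup.mk c := by
  rw [FreeGroup.of, FreeGroup.inv_mk, FreeGroup.mul_mk]; rfl

section Cosets

variable {G : Type*} [Group G] (H : Subgroup G)

theorem rcStep_mk (a g : G) : rcStep H (Quotient.mk'' a) g = Quotient.mk'' (a * g) := rfl

theorem rcStep_one (v : RCoset H) : rcStep H v 1 = v := by
  induction v using Quotient.inductionOn' with
  | h a => rw [rcStep_mk, mul_one]

theorem rcStep_rcStep (v : RCoset H) (g g' : G) :
    rcStep H (rcStep H v g) g' = rcStep H v (g * g') := by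
  induction v using Quotient.inductionOn' with
  | h a => rw [rcStep_mk, rcStep_mk, rcStep_mk, mul_assoc]

theorem rcStep_rcRoot_of_mem {h : G} (hh : h ∈ H) : rcStep H (rcRoot H) h = rcRoot H :=
  Quotient.eq''.mpr (QuotientGroup.rightRel_apply.mpr (by simpa using inv_mem hh))

theorem mul_inv_mem_of_mk_eq_mk {a b : G}
    (hab : (Quotient.mk'' a : RCoset H) = Quotient.mk'' b) : a * b⁻¹ ∈ H := by
  simpa using inv_mem (QuotientGroup.rightRel_apply.mp (Quotient.eq''.mp hab))

end Cosets

section Flow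

variable {G : Type*} [Group G] (H : Subgroup G) (X : Type*)

/-- An endpoint and, for each starting vertex of `Sch(H)`, a flow on the edges. In a product the
second factor is read from the endpoint of the first, so a word's flows form a homomorphism. -/
@[ext]
structure FlowGroup where
  endpoint : G
  flow : RCoset H → (RCoset H × X →₀ ℤ)

namespace FlowGroup

variable {H X}

noncomputable instance : Mul (FlowGroup H X) :=
  ⟨fun p q => ⟨p.endpoint * q.endpoint, fun u => p.flow u + q.flow (rcStep H u p.endpoint)⟩⟩

noncomputable instance : One (FlowGroup H X) := ⟨⟨1, fun _ => 0⟩⟩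

noncomputable instance : Inv (FlowGroup H X) :=
  ⟨fun p => ⟨p.endpoint⁻¹, fun u => -p.flow (rcStep H u p.endpoint⁻¹)⟩⟩

@[simp] theorem mul_endpoint (p q : FlowGroup H X) :
    (p * q).endpoint = p.endpoint * q.endpoint := rfl

@[simp] theorem mul_flow (p q : FlowGroup H X) (u : RCoset H) :
    (p * q).flow u = p.flow u + q.flow (rcStep H u p.endpoint) := rfl

@[simp] theorem one_endpoint : (1 : FlowGroup H X).endpoint = 1 := rfl

@[simp] theorem one_flow (u : RCoset H) : (1 : FlowGroup H X).flow u = 0 := rfl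

@[simp] theorem inv_endpoint (p : FlowGroup H X) : p⁻¹.endpoint = p.endpoint⁻¹ := rfl

@[simp] theorem inv_flow (p : FlowGroup H X) (u : RCoset H) :
    p⁻¹.flow u = -p.flow (rcStep H u p.endpoint⁻¹) := rfl

noncomputable instance : Group (FlowGroup H X) where
  mul_assoc p q r := by ext <;> simp [mul_assoc, rcStep_rcStep, add_assoc]
  one_mul p := by ext <;> simp [rcStep_one]
  mul_one p := by ext <;> simp
  inv_mul_cancel p := by ext <;> simp

end FlowGroup

variable {X} (emb : X → G)

noncomputable def flowHom : FreeGroup X →* FlowGroup H X :=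
  FreeGroup.lift fun x => ⟨emb x, fun u => Finsupp.single (u, x) 1⟩

theorem flowHom_of (x : X) :
    flowHom H emb (FreeGroup.of x) = ⟨emb x, fun u => Finsupp.single (u, x) 1⟩ :=
  FreeGroup.lift_apply_of

theorem flowHom_endpoint (w : FreeGroup X) : (flowHom H emb w).endpoint = FreeGroup.lift emb w := by
  induction w using FreeGroup.induction_on with
  | C1 => rfl
  | of x => rw [flowHom_of, FreeGroup.lift_apply_of]
  | inv_of x ih => rw [map_inv, map_inv, FlowGroup.inv_endpoint, ih]
  | mul a b iha ihb => rw [map_mul, map_mul, FlowGroup.mul_endpoint, iha, ihb]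

theorem flowHom_mul_flow (a b : FreeGroup X) (v : RCoset H) :
    (flowHom H emb (a * b)).flow v =
      (flowHom H emb a).flow v + (flowHom H emb b).flow (rcStep H v (FreeGroup.lift emb a)) := by
  rw [map_mul, FlowGroup.mul_flow, flowHom_endpoint]

theorem flowHom_inv_flow (a : FreeGroup X) (v : RCoset H) :
    (flowHom H emb a⁻¹).flow v = -(flowHom H emb a).flow (rcStep H v (FreeGroup.lift emb a)⁻¹) := by
  rw [map_inv, FlowGroup.inv_flow, flowHom_endpoint]

theorem vFlow_eq_flowHom (c : List (X × Bool)) (v a : RCoset H) (x : X) :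
    vFlow (rcStep H) emb v c a x = (flowHom H emb (FreeGroup.mk c)).flow v (a, x) := by
  induction c generalizing v with
  | nil => rfl
  | cons l c ih =>
    obtain ⟨z, _ | _⟩ := l
    · rw [vFlow, ih, FreeGroup.mk_cons_false, flowHom_mul_flow, flowHom_inv_flow,
        map_inv, FreeGroup.lift_apply_of, flowHom_of]
      simp [Finsupp.single_apply, eq_comm, apply_ite Neg.neg]
    · rw [vFlow, ih, FreeGroup.mk_cons_true, flowHom_mul_flow,
        FreeGroup.lift_apply_of, flowHom_of]
      simp [Finsupp.single_apply, eq_comm]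

theorem vFlow_toWord_eq_zero_iff [DecidableEq X] (v : RCoset H) (w : FreeGroup X) :
    vFlow (rcStep H) emb v w.toWord = (fun _ _ => 0) ↔ (flowHom H emb w).flow v = 0 := by
  simp only [funext_iff, Finsupp.ext_iff, Prod.forall, vFlow_eq_flowHom, FreeGroup.mk_toWord,
    Finsupp.coe_zero, Pi.zero_apply]

end Flow

section Kernel

variable {G X : Type*} [Group G] (H : Subgroup G) (emb : X → G)

noncomputable def rootFlow :
    H.comap (FreeGroup.lift emb) →* Multiplicative (RCoset H × X →₀ ℤ) where
  toFun k := Multiplicative.ofAdd ((flowHom H emb k).flow (rcRoot H))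
  map_one' := by rw [Subgroup.coe_one, map_one]; rfl
  map_mul' k l := by
    rw [Subgroup.coe_mul, flowHom_mul_flow, rcStep_rcRoot_of_mem H (Subgroup.mem_comap.mp k.2)]
    rfl

variable {H emb} (t : RCoset H → FreeGroup X)
  (ht : ∀ v, (Quotient.mk'' (FreeGroup.lift emb (t v)) : RCoset H) = v)

/-- For `w` a generator these are the Schreier generators of `K`. -/
def schreierElt (v : RCoset H) (w : FreeGroup X) : H.comap (FreeGroup.lift emb) :=
  ⟨t v * w * (t (rcStep H v (FreeGroup.lift emb w)))⁻¹, by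
    rw [Subgroup.mem_comap, map_mul, map_mul, map_inv]
    refine mul_inv_mem_of_mk_eq_mk H ?_
    rw [← rcStep_mk, ht, ht]⟩

theorem schreierElt_one (v : RCoset H) : schreierElt t ht v 1 = 1 :=
  Subtype.ext <| by
    simp only [schreierElt, map_one, rcStep_one, mul_one, mul_inv_cancel, Subgroup.coe_one]

theorem schreierElt_mul (v : RCoset H) (a b : FreeGroup X) :
    schreierElt t ht v (a * b) =
      schreierElt t ht v a * schreierElt t ht (rcStep H v (FreeGroup.lift emb a)) b :=
  Subtype.ext <| by
    simp only [schreierElt, map_mul, rcStep_rcStep, Subgroup.coe_mul]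
    group

theorem schreierElt_inv (v : RCoset H) (a : FreeGroup X) :
    schreierElt t ht v a⁻¹ = (schreierElt t ht (rcStep H v (FreeGroup.lift emb a)⁻¹) a)⁻¹ :=
  Subtype.ext <| by
    simp only [schreierElt, map_inv, rcStep_rcStep, inv_mul_cancel, rcStep_one,
      Subgroup.coe_inv]
    group

theorem abelianization_of_schreierElt_rcRoot (k : H.comap (FreeGroup.lift emb)) :
    Abelianization.of (schreierElt t ht (rcRoot H) k) = Abelianization.of k := by
  have ht₀ : t (rcRoot H) ∈ H.comap (FreeGroup.lift emb) := by
    simpa using mul_inv_mem_of_mk_eq_mk H (b := 1) (ht (rcRoot H))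
  have hconj : schreierElt t ht (rcRoot H) k = ⟨_, ht₀⟩ * k * (⟨_, ht₀⟩)⁻¹ := Subtype.ext <| by
    simp only [schreierElt, rcStep_rcRoot_of_mem H (Subgroup.mem_comap.mp k.2), Subgroup.coe_mul,
      Subgroup.coe_inv]
  rw [hconj, map_mul, map_mul, map_inv, mul_inv_cancel_comm]

noncomputable def schreierSum :
    (RCoset H × X →₀ ℤ) →ₗ[ℤ] Additive (Abelianization (H.comap (FreeGroup.lift emb))) :=
  Finsupp.linearCombination ℤ fun p =>
    Additive.ofMul (Abelianization.of (schreierElt t ht p.1 (FreeGroup.of p.2)))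

theorem schreierSum_flowHom (w : FreeGroup X) (v : RCoset H) :
    schreierSum t ht ((flowHom H emb w).flow v) =
      Additive.ofMul (Abelianization.of (schreierElt t ht v w)) := by
  induction w using FreeGroup.induction_on generalizing v with
  | C1 =>
    show schreierSum t ht 0 = _
    rw [map_zero, schreierElt_one, map_one, ofMul_one]
  | of x =>
    rw [flowHom_of]
    exact (Finsupp.linearCombination_single ℤ 1 (v, x)).trans (one_smul ℤ _)
  | inv_of x ih => rw [flowHom_inv_flow, map_neg, ih, schreierElt_inv, map_inv, ofMul_inv]
  | mul a b iha ihb => rw [flowHom_mul_flow, map_add, iha, ihb, schreierElt_mul, map_mul, ofMul_mul]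

variable (H emb)

theorem ker_rootFlow (hsurj : Function.Surjective (FreeGroup.lift emb)) :
    (rootFlow H emb).ker = commutator (H.comap (FreeGroup.lift emb)) := by
  refine le_antisymm (fun k hk => ?_) (Abelianization.commutator_subset_ker _)
  have ht : ∀ v : RCoset H,
      (Quotient.mk'' (FreeGroup.lift emb (Function.surjInv hsurj v.out)) : RCoset H) = v := by
    intro v
    rw [Function.surjInv_eq hsurj]
    exact Quotient.out_eq' v
  have hflow : (flowHom H emb k).flow (rcRoot H) = 0 := hk
  rw [← Abelianization.ker_of, MonoidHom.mem_ker, ← abelianization_of_schreierElt_rcRoot _ ht,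
    ← ofMul_eq_zero, ← schreierSum_flowHom, hflow, map_zero]

theorem flowHom_flow_rcRoot_eq_zero_iff (hsurj : Function.Surjective (FreeGroup.lift emb))
    {w : FreeGroup X} (hw : FreeGroup.lift emb w ∈ H) :
    (flowHom H emb w).flow (rcRoot H) = 0 ↔
      w ∈ ⁅H.comap (FreeGroup.lift emb), H.comap (FreeGroup.lift emb)⁆ := by
  rw [← Subgroup.map_subtype_commutator, ← ker_rootFlow H emb hsurj]
  change rootFlow H emb ⟨w, hw⟩ = 1 ↔ _
  rw [← MonoidHom.mem_ker]
  exact (Subgroup.mem_map_iff_mem (Subgroup.subtype_injective _)).symm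

end Kernel

/-- The flow defined by `y` on the Schreier graph of the cyclic subgroup `⟨y⟩` of the
free solvable group `S_{r,d-1}` is identically zero if and only if `y = 1` in `S_{r,d}`. -/
theorem stmt13 (r d : ℕ) (hd : 1 ≤ d) (y : FreeGroup (Fin r)) :
    (vFlow
        (rcStep (Subgroup.zpowers
          (QuotientGroup.mk y :
            FreeGroup (Fin r) ⧸ derivedSeries (FreeGroup (Fin r)) (d - 1))))
        (fun i => (QuotientGroup.mk (FreeGroup.of i) :
            FreeGroup (Fin r) ⧸ derivedSeries (FreeGroup (Fin r)) (d - 1)))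
        (rcRoot _) y.toWord = fun _ _ => 0) ↔
      (QuotientGroup.mk y :
          FreeGroup (Fin r) ⧸ derivedSeries (FreeGroup (Fin r)) d) = 1 := by
  set N := derivedSeries (FreeGroup (Fin r)) (d - 1)
  have hlift : FreeGroup.lift (fun i => (QuotientGroup.mk (FreeGroup.of i) :
      FreeGroup (Fin r) ⧸ N)) = QuotientGroup.mk' N :=
    FreeGroup.ext_hom _ _ fun i => FreeGroup.lift_apply_of
  have hderived : derivedSeries (FreeGroup (Fin r)) d = ⁅N, N⁆ := by
    rw [← Nat.sub_add_cancel hd, derivedSeries_succ]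
  rw [vFlow_toWord_eq_zero_iff, flowHom_flow_rcRoot_eq_zero_iff _ _
      (hlift ▸ QuotientGroup.mk'_surjective N) (hlift ▸ Subgroup.mem_zpowers _),
    hlift, Subgroup.mem_commutator_comap_zpowers_iff, QuotientGroup.eq_one_iff, hderived]
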